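/- arXiv:2203.16271 — 2 statements merged into one kernel-verified Lean document; each statement's English description precedes it below -/
import Mathlib

section
/- If f is μ-strongly convex (μ ≥ 0) and x^{k+1} = argmin_x { f(x) + (r/2)‖x − x^k + (1/r)A^T λ^k‖² }, then for all x: f(x^{k+1}) − f(x) ≤ (r/2)‖x^k − x‖² − ((r+μ)/2)‖x^{k+1} − x‖² − (r/2)‖x^k − x^{k+1}‖² + (λ^k)^T A(x − x^{k+1}). -/
/-!
Apply strong convexity at `x1` with the subgradient `-(Aᵀλ + r (x1 - xk))` supplied by the
optimality condition of the proximal step. The cross term `r (x1 - xk) ⬝ᵥ (x - x1)` then splits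
into the three squared distances by the three-point identity.
-/

open Matrix

/-- The convex subdifferential of a real-valued function. -/
def subdiff {n : ℕ} (f : (Fin n → ℝ) → ℝ) (x : Fin n → ℝ) : Set (Fin n → ℝ) :=
  {g | ∀ y : Fin n → ℝ, f x + g ⬝ᵥ (y - x) ≤ f y}

section ThreePoint

variable {ι R : Type*} [Fintype ι] [CommRing R]

theorem two_mul_sub_dotProduct_sub (u v w : ι → R) :
    2 * ((v - u) ⬝ᵥ (w - v)) =
      (u - w) ⬝ᵥ (u - w) - (v - w) ⬝ᵥ (v - w) - (u - v) ⬝ᵥ (u - v) := by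
  simp only [dotProduct, Pi.sub_apply, Finset.mul_sum, ← Finset.sum_sub_distrib]
  exact Finset.sum_congr rfl fun i _ => by ring

theorem sub_dotProduct_sub_comm (u v : ι → R) : (u - v) ⬝ᵥ (u - v) = (v - u) ⬝ᵥ (v - u) := by
  rw [← neg_sub, neg_dotProduct_neg]

end ThreePoint

theorem le_of_proximal_step_of_strongConvex {ι : Type*} [Fintype ι] {f : (ι → ℝ) → ℝ}
    {μ r : ℝ} {c xk x1 : ι → ℝ}
    (hsc : ∀ x, f x1 + -(c + r • (x1 - xk)) ⬝ᵥ (x - x1) + μ / 2 * ((x - x1) ⬝ᵥ (x - x1)) ≤ f x)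
    (x : ι → ℝ) :
    f x1 - f x ≤ r / 2 * ((xk - x) ⬝ᵥ (xk - x)) - (r + μ) / 2 * ((x1 - x) ⬝ᵥ (x1 - x))
      - r / 2 * ((xk - x1) ⬝ᵥ (xk - x1)) + c ⬝ᵥ (x - x1) := by
  have h := hsc x
  have hsplit : -(c + r • (x1 - xk)) ⬝ᵥ (x - x1)
      = -(c ⬝ᵥ (x - x1)) - r * ((x1 - xk) ⬝ᵥ (x - x1)) := by
    rw [neg_dotProduct, add_dotProduct, smul_dotProduct, smul_eq_mul]
    ring
  have hthree := two_mul_sub_dotProduct_sub xk x1 x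
  rw [hsplit, sub_dotProduct_sub_comm x] at h
  linear_combination h + r / 2 * hthree

theorem stmt_4_general {m n : ℕ} (f : (Fin n → ℝ) → ℝ) (A : Matrix (Fin m) (Fin n) ℝ)
    (μ r : ℝ)
    (hsc : ∀ y g, g ∈ subdiff f y → ∀ x : Fin n → ℝ,
      f y + g ⬝ᵥ (x - y) + μ / 2 * ((x - y) ⬝ᵥ (x - y)) ≤ f x)
    (lamk : Fin m → ℝ) (xk x1 : Fin n → ℝ)
    (hopt : -(Aᵀ.mulVec lamk + r • (x1 - xk)) ∈ subdiff f x1) :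
    ∀ x : Fin n → ℝ,
      f x1 - f x ≤ r / 2 * ((xk - x) ⬝ᵥ (xk - x)) - (r + μ) / 2 * ((x1 - x) ⬝ᵥ (x1 - x))
        - r / 2 * ((xk - x1) ⬝ᵥ (xk - x1)) + lamk ⬝ᵥ A.mulVec (x - x1) := by
  intro x
  have hadj : Aᵀ.mulVec lamk ⬝ᵥ (x - x1) = lamk ⬝ᵥ A.mulVec (x - x1) := by
    rw [mulVec_transpose, dotProduct_mulVec]
  rw [← hadj]
  exact le_of_proximal_step_of_strongConvex (hsc x1 _ hopt) x

/-- Descent inequality for the `x`-subproblem of balanced ALM under μ-strong convexity. -/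
theorem stmt_4 {m n : ℕ} (f : (Fin n → ℝ) → ℝ) (A : Matrix (Fin m) (Fin n) ℝ)
    (μ r : ℝ) (hμ : 0 ≤ μ) (hr : 0 < r)
    (hsc : ∀ y g, g ∈ subdiff f y → ∀ x : Fin n → ℝ,
      f y + g ⬝ᵥ (x - y) + μ / 2 * ((x - y) ⬝ᵥ (x - y)) ≤ f x)
    (lamk : Fin m → ℝ) (xk x1 : Fin n → ℝ)
    (hmin : ∀ z : Fin n → ℝ,
      f x1 + r / 2 * ((x1 - xk + (1 / r) • Aᵀ.mulVec lamk) ⬝ᵥ (x1 - xk + (1 / r) • Aᵀ.mulVec lamk))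
        ≤ f z + r / 2 * ((z - xk + (1 / r) • Aᵀ.mulVec lamk) ⬝ᵥ (z - xk + (1 / r) • Aᵀ.mulVec lamk)))
    (hopt : -(Aᵀ.mulVec lamk + r • (x1 - xk)) ∈ subdiff f x1) :
    ∀ x : Fin n → ℝ,
      f x1 - f x ≤ r / 2 * ((xk - x) ⬝ᵥ (xk - x)) - (r + μ) / 2 * ((x1 - x) ⬝ᵥ (x1 - x))
        - r / 2 * ((xk - x1) ⬝ᵥ (xk - x1)) + lamk ⬝ᵥ A.mulVec (x - x1) :=
  stmt_4_general f A μ r hsc lamk xk x1 hopt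
end

section
/- (Lemma 3 of the paper.) Let f be μ-strongly convex, δ^k = δ'/r^{k+1} with δ' > 0, H = AA^T + δ'I_m. Suppose x^{k+1} satisfies 0 ∈ ∂f(x^{k+1}) + A^T λ^k + r^k(x^{k+1} − x^k), and H(λ^k − λ^{k−1}) = r^k(A x̃^k − b). Then for all x ∈ R^n, λ ∈ R^m: f(x^{k+1}) + λ^T(Ax^{k+1} − b) − f(x) − (λ^k)^T(Ax − b) ≤ (r^k/2)‖x^k − x‖² − ((r^k+μ)/2)‖x^{k+1} − x‖² − (r^k/2)‖x^k − x^{k+1}‖² + (1/(2r^k))(‖λ^{k−1} − λ‖²_H − ‖λ^k − λ‖²_H − ‖λ^{k−1} − λ^k‖²_H) + (λ^k − λ)^T A(x̃^k − x^{k+1}). -/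
open Matrix

/-- three-point identity for the dot product. -/
lemma dp_id {n : ℕ} (a b c : Fin n → ℝ) :
    (b - a) ⬝ᵥ (c - b) = 1/2 * ((a - c) ⬝ᵥ (a - c)) - 1/2 * ((b - c) ⬝ᵥ (b - c))
      - 1/2 * ((a - b) ⬝ᵥ (a - b)) := by
  simp only [sub_dotProduct, dotProduct_sub]
  rw [dotProduct_comm c a, dotProduct_comm c b, dotProduct_comm b a]
  ring

/-- three-point identity for a symmetric bilinear form given by a matrix. -/
lemma dp_id2 {m : ℕ} (H : Matrix (Fin m) (Fin m) ℝ)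
    (hsym : ∀ u v : Fin m → ℝ, u ⬝ᵥ H.mulVec v = v ⬝ᵥ H.mulVec u)
    (a b c : Fin m → ℝ) :
    (a - b) ⬝ᵥ H.mulVec (b - c) = 1/2 * ((c - a) ⬝ᵥ H.mulVec (c - a))
      - 1/2 * ((b - a) ⬝ᵥ H.mulVec (b - a)) - 1/2 * ((c - b) ⬝ᵥ H.mulVec (c - b)) := by
  simp only [sub_dotProduct, Matrix.mulVec_sub, dotProduct_sub]
  rw [hsym c a, hsym b a, hsym c b]
  ring

/-- Lemma 3 of the paper: the basic inequality for accelerated balanced ALM. -/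
theorem stmt_12 {m n : ℕ} (f : (Fin n → ℝ) → ℝ) (μ : ℝ) (hμ : 0 ≤ μ)
    (hsc : ∀ y g, g ∈ subdiff f y → ∀ x : Fin n → ℝ,
      f y + g ⬝ᵥ (x - y) + μ / 2 * ((x - y) ⬝ᵥ (x - y)) ≤ f x)
    (A : Matrix (Fin m) (Fin n) ℝ) (b : Fin m → ℝ)
    (rk δ' : ℝ) (hrk : 0 < rk) (hδ : 0 < δ')
    (H : Matrix (Fin m) (Fin m) ℝ)
    (hH : H = A * Aᵀ + δ' • (1 : Matrix (Fin m) (Fin m) ℝ))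
    (xk x1 xt : Fin n → ℝ) (lamkm lamk : Fin m → ℝ)
    (hopt : -(Aᵀ.mulVec lamk + rk • (x1 - xk)) ∈ subdiff f x1)
    (hup : H.mulVec (lamk - lamkm) = rk • (A.mulVec xt - b)) :
    ∀ (x : Fin n → ℝ) (lam : Fin m → ℝ),
      f x1 + lam ⬝ᵥ (A.mulVec x1 - b) - f x - lamk ⬝ᵥ (A.mulVec x - b)
        ≤ rk / 2 * ((xk - x) ⬝ᵥ (xk - x)) - (rk + μ) / 2 * ((x1 - x) ⬝ᵥ (x1 - x))
          - rk / 2 * ((xk - x1) ⬝ᵥ (xk - x1))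
          + 1 / (2 * rk) * ((lamkm - lam) ⬝ᵥ H.mulVec (lamkm - lam)
              - (lamk - lam) ⬝ᵥ H.mulVec (lamk - lam)
              - (lamkm - lamk) ⬝ᵥ H.mulVec (lamkm - lamk))
          + (lamk - lam) ⬝ᵥ A.mulVec (xt - x1) := by
  intro x lam
  have hrk' : rk ≠ 0 := ne_of_gt hrk
  -- symmetry of H
  have hHt : Hᵀ = H := by
    rw [hH]
    simp [Matrix.transpose_add, Matrix.transpose_mul, Matrix.transpose_smul]
  have hsym : ∀ u v : Fin m → ℝ, u ⬝ᵥ H.mulVec v = v ⬝ᵥ H.mulVec u := by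
    intro u v
    calc u ⬝ᵥ H.mulVec v = Hᵀ.mulVec u ⬝ᵥ v := by
          rw [Matrix.dotProduct_mulVec, Matrix.mulVec_transpose]
      _ = v ⬝ᵥ H.mulVec u := by rw [hHt, dotProduct_comm]
  -- strong convexity at x1
  have key := hsc x1 _ hopt x
  have hAt : (Aᵀ.mulVec lamk) ⬝ᵥ (x - x1) = lamk ⬝ᵥ A.mulVec (x - x1) := by
    rw [Matrix.mulVec_transpose, ← Matrix.dotProduct_mulVec]
  have hg : (-(Aᵀ.mulVec lamk + rk • (x1 - xk))) ⬝ᵥ (x - x1)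
      = -(lamk ⬝ᵥ A.mulVec (x - x1)) - rk * ((x1 - xk) ⬝ᵥ (x - x1)) := by
    rw [neg_dotProduct, add_dotProduct, hAt, smul_dotProduct,
      smul_eq_mul]
    ring
  rw [hg] at key
  have h1 : f x1 - f x ≤ lamk ⬝ᵥ A.mulVec (x - x1) + rk * ((x1 - xk) ⬝ᵥ (x - x1))
      - μ / 2 * ((x - x1) ⬝ᵥ (x - x1)) := by linarith
  -- quadratic identity on x-side
  have h2 : rk * ((x1 - xk) ⬝ᵥ (x - x1))
      = rk/2 * ((xk - x) ⬝ᵥ (xk - x)) - rk/2 * ((x1 - x) ⬝ᵥ (x1 - x))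
        - rk/2 * ((xk - x1) ⬝ᵥ (xk - x1)) := by
    have h := dp_id xk x1 x
    nlinarith [h]
  -- norm symmetry
  have h3 : (x - x1) ⬝ᵥ (x - x1) = (x1 - x) ⬝ᵥ (x1 - x) := by
    have hx : x - x1 = -(x1 - x) := by abel
    rw [hx, neg_dotProduct, dotProduct_neg, neg_neg]
  -- lambda side
  have hAxt : A.mulVec xt - b = (1/rk) • H.mulVec (lamk - lamkm) := by
    rw [hup, smul_smul, one_div_mul_cancel hrk', one_smul]
  have h4 : (lam - lamk) ⬝ᵥ (A.mulVec x1 - b)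
      = (1/rk) * ((lam - lamk) ⬝ᵥ H.mulVec (lamk - lamkm))
        + (lamk - lam) ⬝ᵥ A.mulVec (xt - x1) := by
    have e1 : A.mulVec x1 - b = (A.mulVec xt - b) - A.mulVec (xt - x1) := by
      rw [Matrix.mulVec_sub]; abel
    have e2 : (lam - lamk) ⬝ᵥ A.mulVec (xt - x1)
        = -((lamk - lam) ⬝ᵥ A.mulVec (xt - x1)) := by
      have hx : lam - lamk = -(lamk - lam) := by abel
      rw [hx, neg_dotProduct]
    rw [e1, dotProduct_sub, hAxt, dotProduct_smul, smul_eq_mul, e2]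
    ring
  have h5 : (lam - lamk) ⬝ᵥ H.mulVec (lamk - lamkm)
      = 1/2 * ((lamkm - lam) ⬝ᵥ H.mulVec (lamkm - lam))
        - 1/2 * ((lamk - lam) ⬝ᵥ H.mulVec (lamk - lam))
        - 1/2 * ((lamkm - lamk) ⬝ᵥ H.mulVec (lamkm - lamk)) :=
    dp_id2 H hsym lam lamk lamkm
  -- combine linear pieces
  have h6 : lam ⬝ᵥ (A.mulVec x1 - b) - lamk ⬝ᵥ (A.mulVec x - b) + lamk ⬝ᵥ A.mulVec (x - x1)
      = (lam - lamk) ⬝ᵥ (A.mulVec x1 - b) := by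
    simp only [Matrix.mulVec_sub, dotProduct_sub, sub_dotProduct]
    ring
  have h7 : (lam - lamk) ⬝ᵥ (A.mulVec x1 - b)
      = 1 / (2 * rk) * ((lamkm - lam) ⬝ᵥ H.mulVec (lamkm - lam)
          - (lamk - lam) ⬝ᵥ H.mulVec (lamk - lam)
          - (lamkm - lamk) ⬝ᵥ H.mulVec (lamkm - lamk))
        + (lamk - lam) ⬝ᵥ A.mulVec (xt - x1) := by
    rw [h4, h5]
    field_simp
  nlinarith [h1, h2, h3, h6, h7]
end
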